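/- Let π = (d_1, d_2, …, d_k, 1, …, 1) be the degree sequence of a tree with d_1 ≥ d_2 ≥ … ≥ d_k ≥ 2 and k ≥ 3. If C(z_1, z_2, …, z_k) is a caterpillar that maximizes φ over 𝒞_π, then there exists an integer t with 1 ≤ t ≤ k−1 such that z_1 ≤ z_2 ≤ … ≤ z_{t−1} < z_t and z_t ≥ z_{t+1} ≥ … ≥ z_k (the condition z_{t−1} < z_t being vacuous when t = 1). -/

import Mathlib

/-!
A subtree of `C(y₁, …, y_k)` is either a single pendant leaf or a spine interval `v_a ⋯ v_b`
together with an arbitrary set of the leaves hanging from it, so `φ` is an explicit sum of powers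
of two. Swapping adjacent entries `z_i, z_{i+1}` only affects the intervals that end at `v_i` or
start at `v_{i+1}`. With `L_i = 1 + f_{V_{≤ i-1}}(v_{i-1})` and `R_i = 1 + f_{V_{≥ i+2}}(v_{i+2})`,
maximality therefore gives `L_i ≤ R_i` at a strict ascent and `R_i ≤ L_i` at a strict descent.
As `L` strictly increases and `R` strictly decreases along the spine, no strict ascent can follow
a strict descent, and the last step is no strict ascent since there `R = 2 < L`. A sequence with
these two properties rises to its first maximum and then falls.
-/

open SimpleGraph

/-- Vertex type of the caterpillar `C(y₁,…,y_k)`: the spine `v₀ v₁ ⋯ v_{k+1}`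
(indexed by `Fin (k+2)`) together with, for each `i : Fin k`, the `y i` pendant
leaves attached at the spine vertex `v_{i+1}`. -/
abbrev CatV (k : ℕ) (y : Fin k → ℕ) : Type :=
  Fin (k + 2) ⊕ (Σ i : Fin k, Fin (y i))

/-- The caterpillar `C(y₁,…,y_k)`, obtained from the path `v₀ v₁ ⋯ v_k v_{k+1}`
by attaching `y i` pendant leaves at the spine vertex `v_{i+1}` for each `i : Fin k`
(so, in 1-based terms, `y_j` leaves at `v_j` for `j = 1,…,k`). -/
def catGraph (k : ℕ) (y : Fin k → ℕ) : SimpleGraph (CatV k y) :=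
  SimpleGraph.fromRel fun a b =>
    match a, b with
    | Sum.inl i, Sum.inl j => (i : ℕ) + 1 = (j : ℕ)
    | Sum.inl i, Sum.inr x => (i : ℕ) = (x.1 : ℕ) + 1
    | Sum.inr _, _ => False

/-- `φ(G)`: the number of subtrees of `G`, i.e. nonempty vertex subsets whose
induced subgraph is connected. -/
noncomputable def numSubtrees {V : Type*} [Fintype V] (G : SimpleGraph V) : ℕ :=
  Nat.card {s : Finset V // s.Nonempty ∧ (G.induce (↑s : Set V)).Connected}

/-- The number of subtrees of the subgraph of `G` induced on `S` that contain
the vertex `v`. -/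
noncomputable def fIn {V : Type*} [Fintype V] (G : SimpleGraph V) (S : Set V) (v : V) : ℕ :=
  Nat.card {s : Finset V // v ∈ s ∧ (↑s : Set V) ⊆ S ∧ (G.induce (↑s : Set V)).Connected}

/-- The multiset of vertex degrees of `G` (the degree sequence, up to ordering). -/
noncomputable def degreeMS {V : Type*} [Fintype V] (G : SimpleGraph V) : Multiset ℕ :=
  Finset.univ.val.map fun v => Nat.card (G.neighborSet v)

/-- A caterpillar: a tree having a path such that every vertex not on the path
is adjacent to a vertex on the path. -/
def IsCaterpillar {V : Type*} (G : SimpleGraph V) : Prop :=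
  G.IsTree ∧ ∃ (u v : V) (p : G.Walk u v), p.IsPath ∧
    ∀ w, w ∉ p.support → ∃ x ∈ p.support, G.Adj w x

/-- The spine vertex `v_j` of the caterpillar `C(y₁,…,y_k)` (for `j ≤ k+1`). -/
def spine (k : ℕ) (y : Fin k → ℕ) (j : ℕ) : CatV k y :=
  Sum.inl ⟨j % (k + 2), Nat.mod_lt _ (by omega)⟩

/-- `V_j`: the vertex set of the connected component containing `v_j` after
deleting the edges `v_{j-1}v_j` and `v_j v_{j+1}`, i.e. `v_j` together with
its pendant leaves. -/
def Vcomp (k : ℕ) (y : Fin k → ℕ) (j : ℕ) : Set (CatV k y) :=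
  {x | Sum.elim (fun i : Fin (k + 2) => (i : ℕ) = j)
      (fun p : Σ i : Fin k, Fin (y i) => (p.1 : ℕ) + 1 = j) x}

/-- `V_{≤j}`: the component containing `v_j` after deleting the edge `v_j v_{j+1}`. -/
def Vle (k : ℕ) (y : Fin k → ℕ) (j : ℕ) : Set (CatV k y) :=
  {x | Sum.elim (fun i : Fin (k + 2) => (i : ℕ) ≤ j)
      (fun p : Σ i : Fin k, Fin (y i) => (p.1 : ℕ) + 1 ≤ j) x}

/-- `V_{≥j}`: the component containing `v_j` after deleting the edge `v_{j-1}v_j`. -/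
def Vge (k : ℕ) (y : Fin k → ℕ) (j : ℕ) : Set (CatV k y) :=
  {x | Sum.elim (fun i : Fin (k + 2) => j ≤ (i : ℕ))
      (fun p : Σ i : Fin k, Fin (y i) => j ≤ (p.1 : ℕ) + 1) x}

/-- `f_{V_j}(v_j)` in the caterpillar `C(y₁,…,y_k)`. -/
noncomputable def fV (k : ℕ) (y : Fin k → ℕ) (j : ℕ) : ℕ :=
  fIn (catGraph k y) (Vcomp k y j) (spine k y j)

/-- `f_{V_{≤j}}(v_j)` in the caterpillar `C(y₁,…,y_k)`. -/
noncomputable def fVle (k : ℕ) (y : Fin k → ℕ) (j : ℕ) : ℕ :=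
  fIn (catGraph k y) (Vle k y j) (spine k y j)

/-- `f_{V_{≥j}}(v_j)` in the caterpillar `C(y₁,…,y_k)`. -/
noncomputable def fVge (k : ℕ) (y : Fin k → ℕ) (j : ℕ) : ℕ :=
  fIn (catGraph k y) (Vge k y j) (spine k y j)

/-- `y` is a permutation of `d`. -/
def IsPermOf (k : ℕ) (y d : Fin k → ℕ) : Prop :=
  ∃ σ : Equiv.Perm (Fin k), ∀ i, y i = d (σ i)

/-- The degree sequence `π = (d₁,…,d_k,1,…,1)` with `n` entries, as a multiset. -/
def degSeq (k : ℕ) (d : Fin k → ℕ) (n : ℕ) : Multiset ℕ :=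
  Finset.univ.val.map d + Multiset.replicate (n - k) 1

open Finset

lemma Finset.card_filter_toLeft_eq_and_toRight_subset {α β : Type*} [Fintype α] [Fintype β]
    [DecidableEq α] [DecidableEq β] (A : Finset α) (B : Finset β) :
    #{u : Finset (α ⊕ β) | u.toLeft = A ∧ u.toRight ⊆ B} = 2 ^ #B := by
  suffices h : ({u : Finset (α ⊕ β) | u.toLeft = A ∧ u.toRight ⊆ B} : Finset _) =
      B.powerset.image A.disjSum by
    rw [h, card_image_of_injective _ fun T T' h => by simpa using congrArg toRight h,
      card_powerset]
  ext u
  simp only [mem_filter, mem_univ, true_and, mem_image, mem_powerset]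
  constructor
  · rintro ⟨hA, hB⟩
    exact ⟨u.toRight, hB, by rw [← hA, toLeft_disjSum_toRight]⟩
  · rintro ⟨T, hT, rfl⟩
    simpa

lemma SimpleGraph.Preconnected.exists_walk_support_subset {V : Type*} {G : SimpleGraph V}
    {s : Set V} (h : (G.induce s).Preconnected) {u v : V} (hu : u ∈ s) (hv : v ∈ s) :
    ∃ p : G.Walk u v, ∀ w ∈ p.support, w ∈ s := by
  obtain ⟨q⟩ := h ⟨u, hu⟩ ⟨v, hv⟩
  let p := q.map (Embedding.induce s).toHom
  have hp : ∀ w ∈ p.support, w ∈ s := by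
    intro w hw
    rw [Walk.support_map, List.mem_map] at hw
    obtain ⟨w, -, rfl⟩ := hw
    exact w.2
  exact ⟨p, hp⟩

lemma Nat.le_of_mul_add_mul_le {A B L R : ℕ} (hAB : A < B) (h : B * L + A * R ≤ A * L + B * R) :
    L ≤ R := by
  nlinarith

theorem exists_unimodal_of_no_valley {α : Type*} [LinearOrder α] {f : ℕ → α} {n : ℕ}
    (hn : 0 < n)
    (hvalley : ∀ i j, i < j → j + 1 < n → f (i + 1) < f i → f j < f (j + 1) → False) :
    ∃ t < n, (∀ s < t, f s < f t) ∧ MonotoneOn f (Set.Iic t) ∧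
      AntitoneOn f (Set.Icc t (n - 1)) := by
  classical
  have hex : ∃ t, t < n ∧ ∀ s < n, f s ≤ f t := by
    obtain ⟨t, ht, hmax⟩ := (range n).exists_max_image f (nonempty_range_iff.2 hn.ne')
    exact ⟨t, mem_range.1 ht, fun s hs => hmax s (mem_range.2 hs)⟩
  obtain ⟨htn, htmax⟩ := Nat.find_spec hex
  set t := Nat.find hex
  have hfirst (s : ℕ) (hs : s < t) : f s < f t := by
    by_contra! h
    exact Nat.find_min hex hs ⟨hs.trans htn, fun r hr => (htmax r hr).trans h⟩
  refine ⟨t, htn, hfirst, monotoneOn_of_le_succ Set.ordConnected_Iic fun a _ _ ha => ?_,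
    antitoneOn_of_succ_le Set.ordConnected_Icc fun a _ ha ha' => ?_⟩
  · simp only [Order.succ_eq_add_one, Set.mem_Iic] at ha ⊢
    by_contra! hdesc
    have hanti : AntitoneOn f (Set.Icc (a + 1) t) :=
      antitoneOn_of_succ_le Set.ordConnected_Icc fun c _ hc hc' => by
        simp only [Order.succ_eq_add_one, Set.mem_Icc] at hc hc' ⊢
        exact not_lt.1 fun hasc => hvalley a c (by omega)
          (by omega) hdesc hasc
    have := hanti ⟨le_rfl, ha⟩ ⟨ha, le_rfl⟩ ha
    exact (htmax a (by omega)).not_gt (this.trans_lt hdesc)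
  · simp only [Order.succ_eq_add_one, Set.mem_Icc] at ha ha' ⊢
    by_contra! hasc
    have hmono : MonotoneOn f (Set.Icc t a) :=
      monotoneOn_of_le_succ Set.ordConnected_Icc fun c _ hc hc' => by
        simp only [Order.succ_eq_add_one, Set.mem_Icc] at hc hc' ⊢
        exact not_lt.1 fun hdesc => hvalley c a (by omega) (by omega) hdesc hasc
    have := hmono ⟨le_rfl, ha.1⟩ ⟨ha.1, le_rfl⟩ ha.1
    exact (htmax (a + 1) (by omega)).not_gt (this.trans_lt hasc)

namespace SimpleGraph.Iso

variable {V W : Type*} {G : SimpleGraph V} {H : SimpleGraph W}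

lemma numSubtrees_eq [Fintype V] [Fintype W] (f : G ≃g H) :
    numSubtrees G = numSubtrees H := by
  refine Nat.card_congr (Equiv.subtypeEquiv f.toEquiv.finsetCongr fun s => ?_)
  have hbij : Set.BijOn f (s : Set V) (f '' s) := f.injective.injOn.bijOn_image
  rw [Equiv.finsetCongr_apply, Finset.map_nonempty, Finset.coe_map]
  exact and_congr Iff.rfl (f.induce hbij).connected_iff

lemma degreeMS_eq [Fintype V] [Fintype W] (f : G ≃g H) : degreeMS G = degreeMS H := by
  rw [degreeMS, degreeMS, ← Finset.map_univ_equiv f.toEquiv, Finset.map_val, Multiset.map_map]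
  exact Multiset.map_congr rfl fun v _ => Nat.card_congr (f.mapNeighborSet v)

lemma isCaterpillar (f : G ≃g H) (hG : IsCaterpillar G) : IsCaterpillar H := by
  obtain ⟨htree, u, v, p, hp, hcover⟩ := hG
  refine ⟨f.isTree_iff.1 htree, f u, f v, p.map f.toHom,
    (Walk.isPath_map_iff_of_injective f.injective).2 hp, fun w hw => ?_⟩
  have hw' : f.symm w ∉ p.support := fun hmem =>
    hw (by rw [Walk.support_map]; exact List.mem_map.2 ⟨_, hmem, by simp⟩)
  obtain ⟨x, hx, hadj⟩ := hcover _ hw'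
  refine ⟨f x, by rw [Walk.support_map]; exact List.mem_map.2 ⟨x, hx, rfl⟩, ?_⟩
  simpa using f.map_rel_iff.2 hadj

end SimpleGraph.Iso

namespace catGraph

variable {k : ℕ} {y : Fin k → ℕ}

def spinePos : CatV k y → ℕ := Sum.elim (fun i => i) (fun x => x.1 + 1)

@[simp] lemma spinePos_inl (i : Fin (k + 2)) : spinePos (Sum.inl i : CatV k y) = i := rfl

@[simp] lemma spinePos_inr (x : Σ i : Fin k, Fin (y i)) :
    spinePos (Sum.inr x : CatV k y) = x.1 + 1 := rfl

lemma adj_inl_inl {i j : Fin (k + 2)} :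
    (catGraph k y).Adj (Sum.inl i) (Sum.inl j) ↔ (i : ℕ) + 1 = j ∨ (j : ℕ) + 1 = i := by
  simp only [catGraph, fromRel_adj, ne_eq, Sum.inl.injEq, Fin.ext_iff]
  omega

lemma adj_inl_inr {i : Fin (k + 2)} {x : Σ i : Fin k, Fin (y i)} :
    (catGraph k y).Adj (Sum.inl i) (Sum.inr x) ↔ (i : ℕ) = x.1 + 1 := by
  simp [catGraph]

lemma adj_inr_inl {i : Fin (k + 2)} {x : Σ i : Fin k, Fin (y i)} :
    (catGraph k y).Adj (Sum.inr x) (Sum.inl i) ↔ (i : ℕ) = x.1 + 1 := by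
  rw [adj_comm, adj_inl_inr]

lemma not_adj_inr_inr {x x' : Σ i : Fin k, Fin (y i)} :
    ¬ (catGraph k y).Adj (Sum.inr x) (Sum.inr x') := by
  simp [catGraph]

def parent (x : Σ i : Fin k, Fin (y i)) : CatV k y := Sum.inl ⟨x.1 + 1, by omega⟩

lemma adj_inr_iff {x : Σ i : Fin k, Fin (y i)} {c : CatV k y} :
    (catGraph k y).Adj (Sum.inr x) c ↔ c = parent x := by
  cases c with
  | inl i => simp [adj_inr_inl, parent, Fin.ext_iff]
  | inr x' => simp [not_adj_inr_inr, parent]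

lemma spinePos_adj {a b : CatV k y} (h : (catGraph k y).Adj a b) :
    spinePos b ≤ spinePos a + 1 ∧ spinePos a ≤ spinePos b + 1 := by
  cases a with
  | inl i =>
    cases b with
    | inl j => have := adj_inl_inl.1 h; simp; omega
    | inr x => have := adj_inl_inr.1 h; simp; omega
  | inr x =>
    obtain rfl := adj_inr_iff.1 h
    simp [parent]

lemma spine_edge_mem_edges {u v : CatV k y} (p : (catGraph k y).Walk u v) {i j : Fin (k + 2)}
    (hij : (i : ℕ) + 1 = j) (hu : spinePos u ≤ i) (hv : (j : ℕ) ≤ spinePos v) :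
    s(Sum.inl i, Sum.inl j) ∈ p.edges := by
  induction p with
  | nil => omega
  | @cons a b c h q ih =>
    rw [Walk.edges_cons, List.mem_cons]
    by_cases hb : spinePos b ≤ i
    · exact Or.inr (ih hb hv)
    left
    have hab := spinePos_adj h
    cases a with
    | inr x => obtain rfl := adj_inr_iff.1 h; simp [parent] at hu hb; omega
    | inl a =>
      cases b with
      | inr x =>
        have ha := adj_inr_iff.1 h.symm
        simp only [parent, Sum.inl.injEq, Fin.ext_iff] at ha
        simp at hu hb
        omega
      | inl b =>
        simp only [spinePos_inl] at hu hb hab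
        obtain rfl : a = i := Fin.ext (by omega)
        obtain rfl : b = j := Fin.ext (by omega)
        rfl

lemma pendant_edge_mem_edges {x : Σ i : Fin k, Fin (y i)} {v : CatV k y}
    (p : (catGraph k y).Walk (Sum.inr x) v) (hv : v ≠ Sum.inr x) :
    s(Sum.inr x, parent x) ∈ p.edges := by
  cases p with
  | nil => exact absurd rfl hv
  | cons h q => obtain rfl := adj_inr_iff.1 h; simp

lemma isAcyclic : (catGraph k y).IsAcyclic := by
  refine isAcyclic_iff_forall_adj_isBridge.2 fun v w hvw => isBridge_iff_forall_walk_mem_edges.2 ?_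
  intro p
  cases v with
  | inl i =>
    cases w with
    | inl j =>
      rcases adj_inl_inl.1 hvw with hij | hji
      · exact spine_edge_mem_edges p hij le_rfl le_rfl
      · simpa [Sym2.eq_swap] using spine_edge_mem_edges p.reverse hji le_rfl le_rfl
    | inr x =>
      have he := pendant_edge_mem_edges p.reverse (by simp)
      rw [← adj_inr_iff.1 hvw.symm] at he
      simpa [Sym2.eq_swap] using he
  | inr x =>
    obtain rfl := adj_inr_iff.1 hvw
    exact pendant_edge_mem_edges p (by simp [parent])

lemma reachable_zero (a : CatV k y) : (catGraph k y).Reachable (Sum.inl 0) a := by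
  have hspine (i : Fin (k + 2)) : (catGraph k y).Reachable (Sum.inl 0) (Sum.inl i) := by
    induction i using Fin.induction with
    | zero => rfl
    | succ i ih => exact ih.trans (adj_inl_inl.2 (Or.inl (by simp))).reachable
  cases a with
  | inl i => exact hspine i
  | inr x => exact (hspine _).trans (adj_inr_iff.2 rfl).symm.reachable

lemma connected : (catGraph k y).Connected :=
  Connected.mk fun a b => (reachable_zero a).symm.trans (reachable_zero b)

lemma isTree : (catGraph k y).IsTree := ⟨connected, isAcyclic⟩

lemma isCaterpillar : IsCaterpillar (catGraph k y) := by
  obtain ⟨p⟩ := reachable_zero (k := k) (y := y) (Sum.inl (Fin.last (k + 1)))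
  have hspine (i : Fin (k + 2)) : Sum.inl i ∈ p.bypass.support := by
    by_cases hi : i = Fin.last (k + 1)
    · exact hi ▸ p.bypass.end_mem_support
    have hlt : (i : ℕ) < k + 1 := Fin.val_lt_last hi
    exact p.bypass.fst_mem_support_of_mem_edges
      (spine_edge_mem_edges _ (i := i) (j := ⟨i + 1, by omega⟩) rfl (by simp) (by simp; omega))
  refine ⟨isTree, _, _, p.bypass, p.bypass_isPath, fun w hw => ?_⟩
  cases w with
  | inl i => exact absurd (hspine i) hw
  | inr x => exact ⟨parent x, hspine _, adj_inr_iff.2 rfl⟩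

def spineIntervals (k : ℕ) : Finset (ℕ × ℕ) :=
  {p ∈ range (k + 2) ×ˢ range (k + 2) | p.1 ≤ p.2}

lemma mem_spineIntervals {p : ℕ × ℕ} :
    p ∈ spineIntervals k ↔ p.1 ≤ p.2 ∧ p.2 ≤ k + 1 := by
  simp only [spineIntervals, mem_filter, mem_product, mem_range]
  omega

/-- The indices whose leaves hang from one of the spine vertices `v_a, …, v_b`. -/
def hubsIn (k a b : ℕ) : Finset (Fin k) := {i | a ≤ (i : ℕ) + 1 ∧ (i : ℕ) + 1 ≤ b}

def leafCount (y : Fin k → ℕ) (a b : ℕ) : ℕ := ∑ i ∈ hubsIn k a b, y i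

variable (y) in
def IsIntervalSubtree (a b : ℕ) (s : Finset (CatV k y)) : Prop :=
  s.toLeft = ({i | a ≤ (i : ℕ) ∧ (i : ℕ) ≤ b} : Finset (Fin (k + 2))) ∧
    s.toRight ⊆ (hubsIn k a b).sigma fun _ => univ

lemma parent_mem {s : Finset (CatV k y)}
    (hs : ((catGraph k y).induce (s : Set (CatV k y))).Preconnected)
    {x : Σ i : Fin k, Fin (y i)} (hx : Sum.inr x ∈ s) {v : CatV k y} (hv : v ∈ s)
    (hvx : v ≠ Sum.inr x) : parent x ∈ s := by
  obtain ⟨p, hp⟩ := hs.exists_walk_support_subset (mem_coe.2 hx) (mem_coe.2 hv)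
  exact hp _ (p.snd_mem_support_of_mem_edges (pendant_edge_mem_edges p hvx))

lemma inl_mem_of_le_of_le {s : Finset (CatV k y)}
    (hs : ((catGraph k y).induce (s : Set (CatV k y))).Preconnected)
    {i j c : Fin (k + 2)} (hi : Sum.inl i ∈ s) (hj : Sum.inl j ∈ s) (hic : i ≤ c)
    (hcj : c ≤ j) :
    Sum.inl c ∈ s := by
  rcases hic.eq_or_lt with rfl | hlt
  · exact hi
  obtain ⟨p, hp⟩ := hs.exists_walk_support_subset (mem_coe.2 hi) (mem_coe.2 hj)
  have hlt : (i : ℕ) < c := hlt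
  exact hp _ (p.snd_mem_support_of_mem_edges (spine_edge_mem_edges p (i := ⟨c - 1, by omega⟩)
    (j := c) (by simp; omega) (by simp; omega) (by simpa using hcj)))

lemma isIntervalSubtree_of_connected {s : Finset (CatV k y)}
    (hs : ((catGraph k y).induce (s : Set (CatV k y))).Connected) :
    (∃ x, s = {Sum.inr x}) ∨ ∃ p ∈ spineIntervals k, IsIntervalSubtree y p.1 p.2 s := by
  by_cases hspine : s.toLeft.Nonempty
  · right
    have hA := mem_toLeft.1 (s.toLeft.min'_mem hspine)
    have hB := mem_toLeft.1 (s.toLeft.max'_mem hspine)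
    refine ⟨(s.toLeft.min' hspine, s.toLeft.max' hspine),
      mem_spineIntervals.2 ⟨min'_le_max' _ hspine, Fin.is_le _⟩, ?_, fun x hx => ?_⟩
    · ext c
      simp only [mem_filter_univ, Fin.val_fin_le]
      exact ⟨fun hc => ⟨min'_le _ _ hc, le_max' _ _ hc⟩,
        fun ⟨h1, h2⟩ => mem_toLeft.2 (inl_mem_of_le_of_le hs.preconnected hA hB h1 h2)⟩
    · have hpx := mem_toLeft.2 (parent_mem hs.preconnected (mem_toRight.1 hx) hA (by simp))
      simp only [mem_sigma, mem_univ, and_true, hubsIn, mem_filter, true_and]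
      exact ⟨min'_le _ _ hpx, le_max' _ _ hpx⟩
  · left
    obtain ⟨⟨a, ha⟩⟩ := hs.nonempty
    cases a with
    | inl i => exact absurd ⟨i, mem_toLeft.2 ha⟩ hspine
    | inr x =>
      refine ⟨x, eq_singleton_iff_unique_mem.2 ⟨ha, fun b hb => ?_⟩⟩
      by_contra hbx
      exact hspine ⟨_, mem_toLeft.2 (parent_mem hs.preconnected ha hb hbx)⟩

lemma connected_of_isIntervalSubtree {a b : ℕ} (hab : a ≤ b) (hb : b ≤ k + 1)
    {s : Finset (CatV k y)} (hs : IsIntervalSubtree y a b s) :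
    ((catGraph k y).induce (s : Set (CatV k y))).Connected := by
  have hspine {c : ℕ} (hc : c < k + 2) : Sum.inl ⟨c, hc⟩ ∈ s ↔ a ≤ c ∧ c ≤ b := by
    rw [← mem_toLeft, hs.1, mem_filter_univ]
  have hroot : Sum.inl ⟨a, by omega⟩ ∈ s := (hspine _).2 ⟨le_rfl, hab⟩
  have hreach (c : ℕ) (hac : a ≤ c) (hcb : c ≤ b) :
      ((catGraph k y).induce (s : Set (CatV k y))).Reachable ⟨_, hroot⟩
        ⟨Sum.inl ⟨c, by omega⟩, (hspine _).2 ⟨hac, hcb⟩⟩ := by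
    induction c, hac using Nat.le_induction with
    | base => rfl
    | succ c hac ih =>
      exact (ih (by omega)).trans (induce_adj.2 (adj_inl_inl.2 (Or.inl rfl))).reachable
  refine (connected_iff_exists_forall_reachable _).2 ⟨⟨_, hroot⟩, ?_⟩
  rintro ⟨c | x, hc⟩
  · obtain ⟨hac, hcb⟩ := (hspine c.2).1 hc
    exact hreach c hac hcb
  · have hx := hs.2 (mem_toRight.2 hc)
    simp only [mem_sigma, hubsIn, mem_filter_univ, mem_univ, and_true] at hx
    exact (hreach _ hx.1 hx.2).trans (induce_adj.2 (adj_inr_iff.2 rfl).symm).reachable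

instance (a b : ℕ) : DecidablePred (IsIntervalSubtree y a b) :=
  fun _ => inferInstanceAs (Decidable (_ ∧ _))

lemma card_isIntervalSubtree (a b : ℕ) :
    #{s | IsIntervalSubtree y a b s} = 2 ^ leafCount y a b := by
  convert card_filter_toLeft_eq_and_toRight_subset
    ({i | a ≤ (i : ℕ) ∧ (i : ℕ) ≤ b} : Finset (Fin (k + 2)))
    ((hubsIn k a b).sigma fun i => (univ : Finset (Fin (y i)))) using 2
  · rfl
  · simp [leafCount]

lemma eq_of_isIntervalSubtree {p q : ℕ × ℕ} (hp : p ∈ spineIntervals k)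
    (hq : q ∈ spineIntervals k) {s : Finset (CatV k y)} (hps : IsIntervalSubtree y p.1 p.2 s)
    (hqs : IsIntervalSubtree y q.1 q.2 s) : p = q := by
  rw [mem_spineIntervals] at hp hq
  have h := Finset.ext_iff.1 (hps.1.symm.trans hqs.1)
  simp only [mem_filter_univ] at h
  have h1 := h ⟨p.1, by omega⟩
  have h2 := h ⟨p.2, by omega⟩
  have h3 := h ⟨q.1, by omega⟩
  have h4 := h ⟨q.2, by omega⟩
  simp only at h1 h2 h3 h4
  exact Prod.ext (by omega) (by omega)

/-- Single leaves, and for each spine interval `v_a ⋯ v_b` every choice of its leaves. -/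
def subtreeCount (k : ℕ) (y : Fin k → ℕ) : ℕ :=
  ∑ i, y i + ∑ p ∈ spineIntervals k, 2 ^ leafCount y p.1 p.2

theorem numSubtrees_eq : numSubtrees (catGraph k y) = subtreeCount k y := by
  classical
  have hclass : numSubtrees (catGraph k y) = #((univ.image fun x => {Sum.inr x}) ∪
      (spineIntervals k).biUnion fun p => {s | IsIntervalSubtree y p.1 p.2 s}) := by
    rw [numSubtrees, Nat.card_eq_fintype_card, Fintype.card_subtype]
    congr 1
    ext s
    simp only [mem_filter_univ, mem_union, mem_image, mem_univ, true_and, mem_biUnion, eq_comm]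
    constructor
    · rintro ⟨-, hs⟩
      exact isIntervalSubtree_of_connected hs
    · rintro (⟨x, rfl⟩ | ⟨p, hp, hs⟩)
      · rw [coe_singleton]
        exact ⟨singleton_nonempty _, Connected.mk Preconnected.of_subsingleton⟩
      · obtain ⟨hab, hb⟩ := mem_spineIntervals.1 hp
        refine ⟨⟨Sum.inl ⟨p.1, by omega⟩, ?_⟩, connected_of_isIntervalSubtree hab hb hs⟩
        rw [← mem_toLeft, hs.1, mem_filter_univ]
        exact ⟨le_rfl, hab⟩
  rw [hclass, card_union_of_disjoint, card_biUnion, subtreeCount]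
  · congr 1
    · rw [card_image_of_injective _ fun x x' h => Sum.inr_injective (singleton_injective h)]
      simp
    · exact sum_congr rfl fun p _ => card_isIntervalSubtree p.1 p.2
  · intro p hp q hq hpq
    refine disjoint_left.2 fun s hsp hsq => hpq ?_
    exact eq_of_isIntervalSubtree hp hq ((mem_filter_univ _).1 hsp) ((mem_filter_univ _).1 hsq)
  · refine disjoint_left.2 fun s hs hs' => ?_
    obtain ⟨x, -, rfl⟩ := mem_image.1 hs
    obtain ⟨p, hp, hps⟩ := mem_biUnion.1 hs'
    have := mem_spineIntervals.1 hp
    have hmem := (Finset.ext_iff.1 ((mem_filter_univ _).1 hps).1 ⟨p.1, by omega⟩).2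
    simp at hmem
    omega

lemma leafCount_comp_swap (w : Fin k → ℕ) {a b : ℕ} {i j : Fin k}
    (h : i ∈ hubsIn k a b ↔ j ∈ hubsIn k a b) :
    leafCount (w ∘ Equiv.swap i j) a b = leafCount w a b := by
  refine sum_equiv (Equiv.swap i j) (fun m => ?_) fun m _ => rfl
  rcases eq_or_ne m i with rfl | hi
  · simpa using h
  rcases eq_or_ne m j with rfl | hj
  · simpa using h.symm
  rw [Equiv.swap_apply_of_ne_of_ne hi hj]

lemma leafCount_succ_right (w : Fin k → ℕ) {a : ℕ} {i : Fin k} (ha : a ≤ (i : ℕ) + 1) :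
    leafCount w a ((i : ℕ) + 1) = w i + leafCount w a i := by
  have : hubsIn k a ((i : ℕ) + 1) = insert i (hubsIn k a i) := by
    ext m
    simp only [hubsIn, mem_filter_univ, mem_insert, Fin.ext_iff]
    omega
  rw [leafCount, this, sum_insert (by simp [hubsIn]), leafCount]

lemma leafCount_succ_left (w : Fin k → ℕ) {b : ℕ} {i : Fin k} (hb : (i : ℕ) + 1 ≤ b) :
    leafCount w ((i : ℕ) + 1) b = w i + leafCount w ((i : ℕ) + 2) b := by
  have : hubsIn k ((i : ℕ) + 1) b = insert i (hubsIn k ((i : ℕ) + 2) b) := by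
    ext m
    simp only [hubsIn, mem_filter_univ, mem_insert, Fin.ext_iff]
    omega
  rw [leafCount, this, sum_insert (by simp [hubsIn]), leafCount]

lemma leafCount_eq_zero_of_lt (w : Fin k → ℕ) {a b : ℕ} (h : b < a) : leafCount w a b = 0 :=
  sum_eq_zero fun m hm => by simp only [hubsIn, mem_filter_univ] at hm; omega

lemma leafCount_mono (w : Fin k → ℕ) {a a' b b' : ℕ} (ha : a' ≤ a) (hb : b ≤ b') :
    leafCount w a b ≤ leafCount w a' b' :=
  sum_le_sum_of_subset fun m => by simp only [hubsIn, mem_filter_univ]; omega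

/-- `1 + f_{V_{≤ i}}(v_i)` in the paper's notation. -/
def leftWeight (w : Fin k → ℕ) (i : ℕ) : ℕ := ∑ a ∈ range (i + 2), 2 ^ leafCount w a i

/-- `1 + f_{V_{≥ i+3}}(v_{i+3})` in the paper's notation. -/
def rightWeight (w : Fin k → ℕ) (i : ℕ) : ℕ :=
  ∑ b ∈ Icc (i + 2) (k + 1), 2 ^ leafCount w (i + 3) b

/-- The spine intervals ending at `v_{i+1}` or starting at `v_{i+2}` are exactly those that contain
one but not both of the hubs `v_{i+1}`, `v_{i+2}` of `i` and `j`. -/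
lemma sum_spineIntervals_eq (w : Fin k → ℕ) {i j : Fin k} (hij : (i : ℕ) + 1 = j) :
    ∑ p ∈ spineIntervals k, 2 ^ leafCount w p.1 p.2 =
      ∑ p ∈ spineIntervals k with p.2 ≠ (j : ℕ) ∧ p.1 ≠ (j : ℕ) + 1,
          2 ^ leafCount w p.1 p.2 +
        2 ^ w i * leftWeight w i + 2 ^ w j * rightWeight w i := by
  have hleft : {p ∈ spineIntervals k | p.2 = (j : ℕ)} =
      (range ((i : ℕ) + 2)).image fun a => (a, (j : ℕ)) := by
    ext ⟨a, b⟩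
    simp only [mem_filter, mem_spineIntervals, mem_image, mem_range, Prod.mk.injEq]
    constructor
    · rintro ⟨⟨hab, -⟩, rfl⟩
      exact ⟨a, by omega, rfl, rfl⟩
    · rintro ⟨a, ha, rfl, rfl⟩
      exact ⟨⟨by omega, by omega⟩, rfl⟩
  have hright : {p ∈ spineIntervals k | p.2 ≠ (j : ℕ) ∧ p.1 = (j : ℕ) + 1} =
      (Icc ((i : ℕ) + 2) (k + 1)).image fun b => ((j : ℕ) + 1, b) := by
    ext ⟨a, b⟩
    simp only [mem_filter, mem_spineIntervals, mem_image, mem_Icc, Prod.mk.injEq]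
    constructor
    · rintro ⟨⟨hab, hb⟩, hbj, rfl⟩
      exact ⟨b, ⟨by omega, hb⟩, rfl, rfl⟩
    · rintro ⟨b, hb, rfl, rfl⟩
      exact ⟨⟨by omega, hb.2⟩, by omega, rfl⟩
  rw [← sum_filter_add_sum_filter_not (spineIntervals k) fun p => p.2 = (j : ℕ),
    ← sum_filter_add_sum_filter_not {p ∈ spineIntervals k | ¬p.2 = (j : ℕ)}
      fun p => p.1 = (j : ℕ) + 1,
    filter_filter, filter_filter, hleft, hright,
    sum_image fun _ _ _ _ h => (Prod.mk.inj h).1, sum_image fun _ _ _ _ h => (Prod.mk.inj h).2,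
    leftWeight, rightWeight, mul_sum, mul_sum]
  have hL : ∑ a ∈ range ((i : ℕ) + 2), 2 ^ leafCount w a j =
      ∑ a ∈ range ((i : ℕ) + 2), 2 ^ w i * 2 ^ leafCount w a i :=
    sum_congr rfl fun a ha => by
      rw [← hij, leafCount_succ_right w (by simp at ha; omega), pow_add]
  have hR : ∑ b ∈ Icc ((i : ℕ) + 2) (k + 1), 2 ^ leafCount w ((j : ℕ) + 1) b =
      ∑ b ∈ Icc ((i : ℕ) + 2) (k + 1), 2 ^ w j * 2 ^ leafCount w ((i : ℕ) + 3) b :=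
    sum_congr rfl fun b hb => by
      rw [leafCount_succ_left w (by simp at hb; omega), pow_add, ← hij]
  rw [hL, hR]
  ring

theorem subtreeCount_comp_swap (z : Fin k → ℕ) {i j : Fin k} (hij : (i : ℕ) + 1 = j) :
    subtreeCount k (z ∘ Equiv.swap i j) + 2 ^ z i * leftWeight z i + 2 ^ z j * rightWeight z i =
      subtreeCount k z + 2 ^ z j * leftWeight z i + 2 ^ z i * rightWeight z i := by
  have hnone {a b : ℕ} (h : b ≤ i ∨ (i : ℕ) + 3 ≤ a) :
      leafCount (z ∘ Equiv.swap i j) a b = leafCount z a b :=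
    leafCount_comp_swap z (by simp only [hubsIn, mem_filter_univ]; omega)
  have hrest : ∑ p ∈ spineIntervals k with p.2 ≠ (j : ℕ) ∧ p.1 ≠ (j : ℕ) + 1,
      2 ^ leafCount (z ∘ Equiv.swap i j) p.1 p.2 =
      ∑ p ∈ spineIntervals k with p.2 ≠ (j : ℕ) ∧ p.1 ≠ (j : ℕ) + 1,
        2 ^ leafCount z p.1 p.2 :=
    sum_congr rfl fun p hp => by
      rw [mem_filter] at hp
      rw [leafCount_comp_swap z (by simp only [hubsIn, mem_filter_univ]; omega)]
  have hL : leftWeight (z ∘ Equiv.swap i j) i = leftWeight z i :=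
    sum_congr rfl fun a _ => by rw [hnone (Or.inl le_rfl)]
  have hR : rightWeight (z ∘ Equiv.swap i j) i = rightWeight z i :=
    sum_congr rfl fun b _ => by rw [hnone (Or.inr le_rfl)]
  rw [subtreeCount, subtreeCount, sum_spineIntervals_eq _ hij, sum_spineIntervals_eq _ hij,
    hrest, hL, hR, show ∑ m, (z ∘ Equiv.swap i j) m = ∑ m, z m from Equiv.sum_comp _ _]
  simp only [Function.comp_apply, Equiv.swap_apply_left, Equiv.swap_apply_right]
  ring

lemma le_leftWeight (w : Fin k → ℕ) (i : ℕ) : i + 2 ≤ leftWeight w i :=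
  calc i + 2 = ∑ _a ∈ range (i + 2), 1 := by simp
    _ ≤ _ := sum_le_sum fun _ _ => Nat.one_le_two_pow

lemma leftWeight_strictMono (w : Fin k → ℕ) : StrictMono (leftWeight w) := by
  refine strictMono_nat_of_lt_succ fun i => ?_
  rw [leftWeight, leftWeight, sum_range_succ _ (i + 1 + 1), leafCount_eq_zero_of_lt w (by omega),
    pow_zero, Nat.lt_add_one_iff]
  exact sum_le_sum fun a _ => Nat.pow_le_pow_right two_pos (leafCount_mono w le_rfl (by omega))

lemma rightWeight_strictAntiOn (w : Fin k → ℕ) :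
    StrictAntiOn (rightWeight w) (Set.Iic (k - 1)) := by
  refine strictAntiOn_of_succ_lt Set.ordConnected_Iic fun i _ _ hi => ?_
  simp only [Order.succ_eq_add_one, Set.mem_Iic] at hi ⊢
  have : Icc (i + 2) (k + 1) = insert (i + 2) (Icc (i + 1 + 2) (k + 1)) := by
    ext m
    simp only [mem_Icc, mem_insert]
    omega
  rw [rightWeight, rightWeight, this, sum_insert (by simp),
    leafCount_eq_zero_of_lt w (by omega), pow_zero, Nat.lt_one_add_iff]
  exact sum_le_sum fun b _ => Nat.pow_le_pow_right two_pos (leafCount_mono w (by omega) le_rfl)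

lemma rightWeight_sub_two (w : Fin k → ℕ) (hk : 2 ≤ k) : rightWeight w (k - 2) = 2 := by
  have : Icc (k - 2 + 2) (k + 1) = {k, k + 1} := by
    ext m
    simp only [mem_Icc, mem_insert, mem_singleton]
    omega
  rw [rightWeight, this, sum_pair (by omega), leafCount_eq_zero_of_lt w (by omega)]
  have : leafCount w (k - 2 + 3) (k + 1) = 0 :=
    sum_eq_zero fun m hm => by simp only [hubsIn, mem_filter_univ] at hm; omega
  rw [this]
  rfl

section swap

variable {z : Fin k → ℕ} {i j : Fin k}

lemma weights_le_of_comp_swap_le (hij : (i : ℕ) + 1 = j)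
    (hle : subtreeCount k (z ∘ Equiv.swap i j) ≤ subtreeCount k z) :
    2 ^ z j * leftWeight z i + 2 ^ z i * rightWeight z i ≤
      2 ^ z i * leftWeight z i + 2 ^ z j * rightWeight z i := by
  have := subtreeCount_comp_swap z hij
  omega

lemma leftWeight_le_rightWeight (hij : (i : ℕ) + 1 = j)
    (hle : subtreeCount k (z ∘ Equiv.swap i j) ≤ subtreeCount k z) (hlt : z i < z j) :
    leftWeight z i ≤ rightWeight z i :=
  Nat.le_of_mul_add_mul_le (Nat.pow_lt_pow_right one_lt_two hlt)
    (weights_le_of_comp_swap_le hij hle)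

lemma rightWeight_le_leftWeight (hij : (i : ℕ) + 1 = j)
    (hle : subtreeCount k (z ∘ Equiv.swap i j) ≤ subtreeCount k z) (hlt : z j < z i) :
    rightWeight z i ≤ leftWeight z i :=
  Nat.le_of_mul_add_mul_le (Nat.pow_lt_pow_right one_lt_two hlt)
    (by linarith [weights_le_of_comp_swap_le hij hle])

end swap

lemma card_neighborSet_inr (x : Σ i : Fin k, Fin (y i)) :
    Nat.card ((catGraph k y).neighborSet (Sum.inr x)) = 1 := by
  rw [show (catGraph k y).neighborSet (Sum.inr x) = {parent x} from Set.ext fun _ => adj_inr_iff]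
  exact Nat.card_unique

lemma card_neighborSet_inl (j : Fin (k + 2)) :
    Nat.card ((catGraph k y).neighborSet (Sum.inl j)) =
      #{i : Fin (k + 2) | (j : ℕ) + 1 = i ∨ (i : ℕ) + 1 = j} +
        Nat.card {x : Σ i : Fin k, Fin (y i) // (j : ℕ) = x.1 + 1} := by
  rw [← Fintype.card_subtype, ← Nat.card_eq_fintype_card, ← Nat.card_sum]
  exact Nat.card_congr (Equiv.subtypeSum.trans (Equiv.sumCongr
    (Equiv.subtypeEquivRight fun _ => adj_inl_inl) (Equiv.subtypeEquivRight fun _ => adj_inl_inr)))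

lemma card_neighborSet_end (j : Fin (k + 2)) (hj : (j : ℕ) = 0 ∨ (j : ℕ) = k + 1) :
    Nat.card ((catGraph k y).neighborSet (Sum.inl j)) = 1 := by
  have hleaf : IsEmpty {x : Σ i : Fin k, Fin (y i) // (j : ℕ) = x.1 + 1} :=
    ⟨fun ⟨x, hx⟩ => by omega⟩
  have hspine : #{i : Fin (k + 2) | (j : ℕ) + 1 = i ∨ (i : ℕ) + 1 = j} = 1 := by
    rw [card_eq_one]
    refine ⟨⟨if (j : ℕ) = 0 then 1 else k, by split_ifs <;> omega⟩, ?_⟩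
    ext i
    simp only [mem_filter_univ, mem_singleton, Fin.ext_iff]
    split_ifs <;> omega
  rw [card_neighborSet_inl, hspine, Nat.card_of_isEmpty]

lemma card_neighborSet_hub (i : Fin k) :
    Nat.card ((catGraph k y).neighborSet (Sum.inl i.castSucc.succ)) = y i + 2 := by
  have hleaf : Nat.card {x : Σ i : Fin k, Fin (y i) // ((i.castSucc.succ : Fin (k + 2)) : ℕ) =
      x.1 + 1} = y i := by
    rw [Nat.card_congr ((Equiv.subtypeEquivRight fun x => by simp [Fin.ext_iff, eq_comm]).trans
      (Equiv.sigmaSubtype i)), Nat.card_eq_fintype_card, Fintype.card_fin]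
  have hspine : #{m : Fin (k + 2) | ((i.castSucc.succ : Fin (k + 2)) : ℕ) + 1 = m ∨
      (m : ℕ) + 1 = i.castSucc.succ} = 2 := by
    rw [card_eq_two]
    refine ⟨⟨i + 2, by omega⟩, ⟨i, by omega⟩, by simp [Fin.ext_iff], ?_⟩
    ext m
    simp only [mem_filter_univ, mem_insert, mem_singleton, Fin.ext_iff, Fin.val_castSucc,
      Fin.val_succ]
    omega
  rw [card_neighborSet_inl, hspine, hleaf, add_comm]

theorem degreeMS_eq :
    degreeMS (catGraph k y) =
      univ.val.map (fun i => y i + 2) + Multiset.replicate (∑ i, y i + 2) 1 := by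
  have huniv : (univ : Finset (CatV k y)).val =
      univ.val.map Sum.inl + univ.val.map Sum.inr := by
    rw [← univ_disjSum_univ]
    rfl
  have hleaves : (univ : Finset (Σ i : Fin k, Fin (y i))).val.map
      (fun x => Nat.card ((catGraph k y).neighborSet (Sum.inr x))) =
      Multiset.replicate (∑ i, y i) 1 := by
    simp only [card_neighborSet_inr, Multiset.map_const', card_val, card_univ,
      Fintype.card_sigma, Fintype.card_fin]
  have hspine : (univ : Finset (Fin (k + 2))).val.map
      (fun j => Nat.card ((catGraph k y).neighborSet (Sum.inl j))) =
      1 ::ₘ (univ.val.map (fun i => y i + 2) + {1}) := by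
    rw [Fin.univ_val_map, List.ofFn_succ, List.ofFn_succ', card_neighborSet_end 0 (Or.inl rfl),
      card_neighborSet_end _ (Or.inr (by simp))]
    simp only [card_neighborSet_hub]
    rw [List.concat_eq_append, ← Multiset.cons_coe, ← Multiset.coe_add, Fin.univ_val_map]
    rfl
  rw [degreeMS, huniv, Multiset.map_add, Multiset.map_map, Multiset.map_map]
  simp only [Function.comp_def]
  rw [hspine, hleaves, Multiset.replicate_succ, Multiset.replicate_succ]
  simp only [← Multiset.singleton_add]
  abel

lemma degreeMS_eq_degSeq {d : Fin k → ℕ} {n : ℕ}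
    (hy : univ.val.map (fun i => y i + 2) = univ.val.map d) (hn : Fintype.card (CatV k y) = n) :
    degreeMS (catGraph k y) = degSeq k d n := by
  rw [degreeMS_eq, degSeq, hy, ← hn]
  congr 2
  simp only [Fintype.card_sum, Fintype.card_sigma, Fintype.card_fin]
  omega

theorem shape_of_forall_comp_swap_le (hk : 3 ≤ k) (z : Fin k → ℕ)
    (hswap : ∀ i j : Fin k, (i : ℕ) + 1 = j →
      subtreeCount k (z ∘ Equiv.swap i j) ≤ subtreeCount k z) :
    ∃ t : Fin k, (t : ℕ) ≤ k - 2 ∧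
      (∀ i j : Fin k, i ≤ j → (j : ℕ) < (t : ℕ) → z i ≤ z j) ∧
      (∀ j : Fin k, (j : ℕ) + 1 = (t : ℕ) → z j < z t) ∧
      (∀ i j : Fin k, t ≤ i → i ≤ j → z j ≤ z i) := by
  set f : ℕ → ℕ := fun n => if h : n < k then z ⟨n, h⟩ else 0
  have hf {n : ℕ} (hn : n < k) : f n = z ⟨n, hn⟩ := dif_pos hn
  have hdesc {i : ℕ} (hi : i + 1 < k) (h : f (i + 1) < f i) :
      rightWeight z i ≤ leftWeight z i := by
    rw [hf hi, hf (by omega)] at h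
    exact rightWeight_le_leftWeight (i := ⟨i, by omega⟩) rfl (hswap _ _ rfl) h
  have hasc {i : ℕ} (hi : i + 1 < k) (h : f i < f (i + 1)) :
      leftWeight z i ≤ rightWeight z i := by
    rw [hf hi, hf (by omega)] at h
    exact leftWeight_le_rightWeight (i := ⟨i, by omega⟩) rfl (hswap _ _ rfl) h
  have hvalley (i j : ℕ) (hij : i < j) (hj : j + 1 < k) (hi : f (i + 1) < f i)
      (hj' : f j < f (j + 1)) : False := by
    have hL := leftWeight_strictMono z hij
    have hR := rightWeight_strictAntiOn z (Set.mem_Iic.2 (by omega : i ≤ k - 1))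
      (Set.mem_Iic.2 (by omega : j ≤ k - 1)) hij
    have := hdesc (by omega) hi
    have := hasc hj hj'
    omega
  have hlast : ¬ f (k - 2) < f (k - 1) := fun h => by
    have := hasc (i := k - 2) (by omega) (by rwa [show k - 2 + 1 = k - 1 by omega])
    have := le_leftWeight z (k - 2)
    rw [rightWeight_sub_two z (by omega)] at *
    omega
  obtain ⟨t, htk, hfirst, hmono, hanti⟩ := exists_unimodal_of_no_valley (by omega) hvalley
  have hz (i : Fin k) : z i = f i := (hf i.2).symm
  refine ⟨⟨t, htk⟩, ?_, fun i j hij hjt => ?_, fun j hjt => ?_, fun i j hti hij => ?_⟩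
  · show t ≤ k - 2
    by_contra! h
    obtain rfl : t = k - 1 := by omega
    exact hlast (hfirst _ (by omega))
  · rw [hz, hz]
    exact hmono (Set.mem_Iic.2 (by simp only at hjt; omega)) (Set.mem_Iic.2 hjt.le) hij
  · rw [hz, hz]
    exact hfirst _ (by simp only at hjt ⊢; omega)
  · rw [Fin.le_def] at hti hij
    rw [hz, hz]
    exact hanti ⟨hti, by omega⟩ ⟨hti.trans hij, by omega⟩ hij

end catGraph

/-- Here `t : Fin k` is the 0-based position of the paper's `t`, so `1 ≤ t ≤ k - 1` becomes
`(t : ℕ) ≤ k - 2`. -/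
theorem max_caterpillar_shape_general (k : ℕ) (hk : 3 ≤ k) (n : ℕ)
    (d : Fin k → ℕ) (hd2 : ∀ i, 2 ≤ d i)
    (z : Fin k → ℕ) (hz : IsPermOf k z (fun i => d i - 2))
    (hn : n = Fintype.card (CatV k z))
    (hmax : ∀ G : SimpleGraph (Fin n), IsCaterpillar G → degreeMS G = degSeq k d n →
      numSubtrees G ≤ numSubtrees (catGraph k z)) :
    ∃ t : Fin k, (t : ℕ) ≤ k - 2 ∧
      (∀ i j : Fin k, i ≤ j → (j : ℕ) < (t : ℕ) → z i ≤ z j) ∧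
      (∀ j : Fin k, (j : ℕ) + 1 = (t : ℕ) → z j < z t) ∧
      (∀ i j : Fin k, t ≤ i → i ≤ j → z j ≤ z i) := by
  obtain ⟨σ, hσ⟩ := hz
  refine catGraph.shape_of_forall_comp_swap_le hk z fun i j _ => ?_
  set y := z ∘ Equiv.swap i j
  have hsum : ∑ m, y m = ∑ m, z m := Equiv.sum_comp _ z
  have hcard : Fintype.card (CatV k y) = n := by
    simp only [hn, Fintype.card_sum, Fintype.card_sigma, Fintype.card_fin, hsum]
  have hyd : (fun m => y m + 2) = d ∘ (Equiv.swap i j).trans σ :=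
    funext fun m => by simp [y, hσ, Nat.sub_add_cancel (hd2 _)]
  let e := Iso.map (Fintype.equivFinOfCardEq hcard) (catGraph k y)
  have hdeg : univ.val.map (fun m => y m + 2) = univ.val.map d := by
    rw [hyd, ← Multiset.map_map, Multiset.map_univ_val_equiv]
  have := hmax _ (e.isCaterpillar catGraph.isCaterpillar)
    (e.degreeMS_eq ▸ catGraph.degreeMS_eq_degSeq hdeg hcard)
  rwa [← e.numSubtrees_eq, catGraph.numSubtrees_eq, catGraph.numSubtrees_eq] at this

/-- Theorem 3.6: if `C(z₁,…,z_k)` (here `z : Fin k → ℕ` 0-based)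
maximizes the number of subtrees over all caterpillars with degree sequence `π`,
then there is `t` (here `t : Fin k` is the 0-based position of the paper's `t`,
so `1 ≤ t ≤ k-1` becomes `(t : ℕ) ≤ k - 2`) with
`z₁ ≤ z₂ ≤ ⋯ ≤ z_{t-1} < z_t` and `z_t ≥ z_{t+1} ≥ ⋯ ≥ z_k`. -/
theorem max_caterpillar_shape (k : ℕ) (hk : 3 ≤ k) (n : ℕ)
    (d : Fin k → ℕ) (hmono : ∀ i j : Fin k, i ≤ j → d j ≤ d i) (hd2 : ∀ i, 2 ≤ d i)
    (z : Fin k → ℕ) (hz : IsPermOf k z (fun i => d i - 2))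
    (hn : n = Fintype.card (CatV k z))
    (hmax : ∀ G : SimpleGraph (Fin n), IsCaterpillar G → degreeMS G = degSeq k d n →
      numSubtrees G ≤ numSubtrees (catGraph k z)) :
    ∃ t : Fin k, (t : ℕ) ≤ k - 2 ∧
      (∀ i j : Fin k, i ≤ j → (j : ℕ) < (t : ℕ) → z i ≤ z j) ∧
      (∀ j : Fin k, (j : ℕ) + 1 = (t : ℕ) → z j < z t) ∧
      (∀ i j : Fin k, t ≤ i → i ≤ j → z j ≤ z i) :=
  max_caterpillar_shape_general k hk n d hd2 z hz hn hmax
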